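/- arXiv:1305.5174 — 2 statements merged into one kernel-verified Lean document; each statement's English description precedes it below -/
import Mathlib

section
/- In the ring of integers of $\mathbb{Q}(\sqrt{15})$, the prime ideals lying over $2$, $3$, $5$, and $17$ are all non-principal. -/
/-! If a prime `P = (z)` of `ℤ[√15]` contains `p`, then `N(z) ∣ N(p) = p²`. Each `p` divides a
product `αβ` whose factors have norms not divisible by `p²` (`(1 + √15)(-1 + √15) = 2 · 7`,
`√15 · √15 = 3 · 5`, `(7 + √15)(7 - √15) = 17 · 2`); as `P` is prime, `z` divides one of them, so
`|N(z)|` is `1` or `p`. The first makes `P` the unit ideal, and the second is impossible because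
`x² - 15y² ≡ ±p` has no solution modulo `5` (modulo `25` for `p = 5`). -/

namespace Zsqrtd

variable {d : ℤ}

theorem natAbs_norm_dvd_of_dvd {z w : ℤ√d} (h : z ∣ w) : z.norm.natAbs ∣ w.norm.natAbs :=
  Int.natAbs_dvd_natAbs.mpr (map_dvd normMonoidHom h)

theorem norm_ne_of_forall_zmod (m : ℕ) {c : ℤ} (h : ∀ x y : ZMod m, x * x - d * (y * y) ≠ c)
    (z : ℤ√d) : z.norm ≠ c := fun hz =>
  h z.re z.im <| by
    rw [← hz, norm_def]
    push_cast
    ring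

theorem natAbs_norm_ne_of_forall_zmod (m : ℕ) {p : ℕ}
    (h : ∀ x y : ZMod m, x * x - d * (y * y) ≠ ((p : ℤ) : ZMod m) ∧
      x * x - d * (y * y) ≠ ((-p : ℤ) : ZMod m))
    (z : ℤ√d) : z.norm.natAbs ≠ p := fun hz => by
  rcases Int.natAbs_eq_iff.mp hz with hz | hz
  · exact norm_ne_of_forall_zmod m (fun x y => (h x y).1) z hz
  · exact norm_ne_of_forall_zmod m (fun x y => (h x y).2) z hz

theorem isUnit_of_dvd_natCast {p : ℕ} (hp : p.Prime) (hnorm : ∀ z : ℤ√d, z.norm.natAbs ≠ p)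
    {z a : ℤ√d} (hzp : z ∣ (p : ℤ√d)) (hza : z ∣ a) (ha : ¬ p ^ 2 ∣ a.norm.natAbs) :
    IsUnit z := by
  have hzp2 : z.norm.natAbs ∣ p ^ 2 := by
    have := natAbs_norm_dvd_of_dvd hzp
    rwa [norm_natCast, Int.natAbs_mul, Int.natAbs_natCast, ← sq] at this
  obtain ⟨k, hk, hzk⟩ := (Nat.dvd_prime_pow hp).mp hzp2
  interval_cases k
  · exact norm_eq_one_iff.mp (by simpa using hzk)
  · exact absurd (by simpa using hzk) (hnorm z)
  · exact absurd (hzk ▸ natAbs_norm_dvd_of_dvd hza) ha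

theorem not_isPrincipal_of_dvd_mul {p : ℕ} (hp : p.Prime) (hnorm : ∀ z : ℤ√d, z.norm.natAbs ≠ p)
    {P : Ideal (ℤ√d)} (hP : P.IsPrime) (hpP : (p : ℤ√d) ∈ P) {α β : ℤ√d}
    (hαβ : (p : ℤ√d) ∣ α * β) (hα : ¬ p ^ 2 ∣ α.norm.natAbs) (hβ : ¬ p ^ 2 ∣ β.norm.natAbs) :
    ¬ P.IsPrincipal := by
  rintro ⟨z, hz⟩
  rw [Ideal.submodule_span_eq] at hz
  subst hz
  have hzp : z ∣ (p : ℤ√d) := Ideal.mem_span_singleton.mp hpP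
  refine hP.ne_top (Ideal.span_singleton_eq_top.mpr ?_)
  rcases hP.mem_or_mem (Ideal.mem_of_dvd _ hαβ hpP) with hzα | hzβ
  · exact isUnit_of_dvd_natCast hp hnorm hzp (Ideal.mem_span_singleton.mp hzα) hα
  · exact isUnit_of_dvd_natCast hp hnorm hzp (Ideal.mem_span_singleton.mp hzβ) hβ

end Zsqrtd

open Zsqrtd in
/-- In the ring of integers `ℤ[√15]` of `ℚ(√15)`, every prime ideal lying over
one of the rational primes `2, 3, 5, 17` is non-principal. -/
theorem stmt5 : ∀ p ∈ ({2, 3, 5, 17} : Set ℕ), ∀ P : Ideal (ℤ√15),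
    P.IsPrime → (p : ℤ√15) ∈ P → ¬ P.IsPrincipal := by
  intro p hp P hP hpP
  simp only [Set.mem_insert_iff, Set.mem_singleton_iff] at hp
  rcases hp with rfl | rfl | rfl | rfl
  · exact not_isPrincipal_of_dvd_mul Nat.prime_two (natAbs_norm_ne_of_forall_zmod 5 (by decide))
      hP hpP (α := ⟨1, 1⟩) (β := ⟨-1, 1⟩) ⟨7, by decide⟩ (by decide) (by decide)
  · exact not_isPrincipal_of_dvd_mul Nat.prime_three (natAbs_norm_ne_of_forall_zmod 5 (by decide))
      hP hpP (α := ⟨0, 1⟩) (β := ⟨0, 1⟩) ⟨5, by decide⟩ (by decide) (by decide)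
  · exact not_isPrincipal_of_dvd_mul Nat.prime_five (natAbs_norm_ne_of_forall_zmod 25 (by decide))
      hP hpP (α := ⟨0, 1⟩) (β := ⟨0, 1⟩) ⟨3, by decide⟩ (by decide) (by decide)
  · exact not_isPrincipal_of_dvd_mul (by norm_num) (natAbs_norm_ne_of_forall_zmod 5 (by decide))
      hP hpP (α := ⟨7, 1⟩) (β := ⟨7, -1⟩) ⟨2, by decide⟩ (by decide) (by decide)
end

section
/- If a group $G$ contains a finite subgroup $U$ and $\Gamma \le G$ is a torsion-free subgroup of finite index, then $|U|$ divides the index $[G:\Gamma]$. -/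
/-!
`U` acts on the cosets `G ⧸ Γ`. If `u ∈ U` fixes `gΓ`, then `g⁻¹ u g ∈ Γ` has finite order, so it
is trivial and `u = 1`. Hence the action is free, and `G ⧸ Γ` is in bijection with
`(orbits) × U`.
-/

theorem MulAction.card_dvd_card_of_stabilizer_eq_bot {G X : Type*} [Group G] [MulAction G X]
    (h : ∀ x : X, stabilizer G x = ⊥) : Nat.card G ∣ Nat.card X := by
  rw [Nat.card_congr (selfEquivOrbitsQuotientProd h), Nat.card_prod]
  exact dvd_mul_left _ _

theorem Subgroup.stabilizer_quotient_eq_bot_of_isOfFinOrder {G : Type*} [Group G]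
    {U Γ : Subgroup G} (hU : ∀ u ∈ U, IsOfFinOrder u)
    (hΓ : ∀ g ∈ Γ, g ≠ 1 → ¬ IsOfFinOrder g) (x : G ⧸ Γ) :
    MulAction.stabilizer U x = ⊥ := by
  induction x using QuotientGroup.induction_on with | H g => ?_
  refine (Subgroup.eq_bot_iff_forall _).mpr fun u hu => ?_
  have hconj : g⁻¹ * u * g ∈ Γ := by
    simpa [mul_assoc] using Γ.inv_mem (QuotientGroup.eq.mp hu)
  have hfin : IsOfFinOrder (g⁻¹ * u * g) := by
    simpa [MulAut.conj_apply] using (MulAut.conj g⁻¹).toMonoidHom.isOfFinOrder (hU u u.2)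
  have htriv : g⁻¹ * u * g = 1 := by_contra fun hne => hΓ _ hconj hne hfin
  exact Subtype.ext ((conj_eq_one_iff (a := g⁻¹)).mp (by rwa [inv_inv]))

theorem stmt15_general (G : Type*) [Group G] (U Γ : Subgroup G) [Finite U]
    (htf : ∀ g : G, g ∈ Γ → g ≠ 1 → ¬ IsOfFinOrder g) :
    Nat.card U ∣ Γ.index :=
  MulAction.card_dvd_card_of_stabilizer_eq_bot <|
    Subgroup.stabilizer_quotient_eq_bot_of_isOfFinOrder
      (fun u hu => U.subtype.isOfFinOrder (isOfFinOrder_of_finite (⟨u, hu⟩ : U))) htf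

/-- If a group `G` contains a finite subgroup `U` and `Γ ≤ G` is a
torsion-free subgroup of finite index, then `|U|` divides `[G : Γ]`. -/
theorem stmt15 (G : Type*) [Group G] (U Γ : Subgroup G) [Finite U]
    (htf : ∀ g : G, g ∈ Γ → g ≠ 1 → ¬ IsOfFinOrder g)
    (hfin : Γ.index ≠ 0) :
    Nat.card U ∣ Γ.index :=
  stmt15_general G U Γ htf
end
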